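/- Closed form for the star query cost (derived in the proof of Lemma 4.3): For a star query with PKFK joins and every permutation σ of Fin n, C(σ) = (Σ i, (R i).card) + (n + 1) * J.card, where J is the full star join. -/
import Mathlib


open Finset

/-- The full star join `J` of the fact table `R₀` with the dimension tables `R i`. -/
def starJoin {α : Type*} {n : ℕ} {β : Fin n → Type*}
    (R₀ : Finset α) (R : ∀ i, Finset (β i))
    (p : ∀ i, α → β i → Prop) [∀ i a b, Decidable (p i a b)] :
    Finset (α × (∀ i, β i)) :=
  (R₀ ×ˢ Fintype.piFinset R).filter fun x => ∀ i, p i x.1 (x.2 i)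

/-- The fact table after the bitvector filters (semi-joins) from all dimension tables
are pushed down to it. -/
def factFiltered {α : Type*} {n : ℕ} {β : Fin n → Type*}
    (R₀ : Finset α) (R : ∀ i, Finset (β i))
    (p : ∀ i, α → β i → Prop) [∀ i a b, Decidable (p i a b)] : Finset α :=
  R₀.filter fun a => ∀ i, ∃ b ∈ R i, p i a b

/-- The partial join `J(s)` of the filtered fact table with the dimension tables indexed
by `s`. -/
def starPartialJoin {α : Type*} {n : ℕ} {β : Fin n → Type*}
    (R₀ : Finset α) (R : ∀ i, Finset (β i))
    (p : ∀ i, α → β i → Prop) [∀ i a b, Decidable (p i a b)]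
    (s : Finset (Fin n)) : Finset (α × (∀ i ∈ s, β i)) :=
  ((factFiltered R₀ R p) ×ˢ s.pi R).filter
    fun x => ∀ i (hi : i ∈ s), p i x.1 (x.2 i hi)

/-- The set `{σ 0, σ 1, …, σ (k-1)}` of the first `k` dimension indices in the
enumeration `σ`. -/
def starPrefix {n : ℕ} (σ : Equiv.Perm (Fin n)) (k : ℕ) : Finset (Fin n) :=
  (Finset.univ.filter fun t : Fin n => (t : ℕ) < k).image σ

/-- The cost `C_out` of the right deep tree `T(R₀, R (σ 0), …, R (σ (n-1)))` with all
bitvector filters pushed down to the fact table. -/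
def starCost {α : Type*} {n : ℕ} {β : Fin n → Type*}
    (R₀ : Finset α) (R : ∀ i, Finset (β i))
    (p : ∀ i, α → β i → Prop) [∀ i a b, Decidable (p i a b)]
    (σ : Equiv.Perm (Fin n)) : ℕ :=
  (∑ i, (R i).card) + (factFiltered R₀ R p).card
    + ∑ k ∈ Finset.range n, (starPartialJoin R₀ R p (starPrefix σ (k + 1))).card


lemma starJoin_card_eq {α : Type*} {n : ℕ} {β : Fin n → Type*}
    (R₀ : Finset α) (R : ∀ i, Finset (β i))
    (p : ∀ i, α → β i → Prop) [∀ i a b, Decidable (p i a b)]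
    (hkey : ∀ (i : Fin n) (a : α), ∀ b₁ ∈ R i, ∀ b₂ ∈ R i,
      p i a b₁ → p i a b₂ → b₁ = b₂) :
    (starJoin R₀ R p).card = (factFiltered R₀ R p).card := by
  apply Finset.card_bij (fun x _ => x.1)
  · rintro ⟨a, f⟩ hx
    simp only [starJoin, factFiltered, Finset.mem_filter, Finset.mem_product,
      Fintype.mem_piFinset] at hx ⊢
    exact ⟨hx.1.1, fun i => ⟨f i, hx.1.2 i, hx.2 i⟩⟩
  · rintro ⟨a, f⟩ hx ⟨a', g⟩ hy h
    simp only [starJoin, Finset.mem_filter, Finset.mem_product,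
      Fintype.mem_piFinset] at hx hy
    cases h
    refine Prod.ext rfl (funext fun i => ?_)
    exact hkey i a _ (hx.1.2 i) _ (hy.1.2 i) (hx.2 i) (hy.2 i)
  · intro a ha
    simp only [factFiltered, Finset.mem_filter] at ha
    refine ⟨⟨a, fun i => (ha.2 i).choose⟩, ?_, rfl⟩
    simp only [starJoin, Finset.mem_filter, Finset.mem_product, Fintype.mem_piFinset]
    exact ⟨⟨ha.1, fun i => (ha.2 i).choose_spec.1⟩, fun i => (ha.2 i).choose_spec.2⟩

lemma starPartialJoin_card_eq {α : Type*} {n : ℕ} {β : Fin n → Type*}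
    (R₀ : Finset α) (R : ∀ i, Finset (β i))
    (p : ∀ i, α → β i → Prop) [∀ i a b, Decidable (p i a b)]
    (hkey : ∀ (i : Fin n) (a : α), ∀ b₁ ∈ R i, ∀ b₂ ∈ R i,
      p i a b₁ → p i a b₂ → b₁ = b₂) (s : Finset (Fin n)) :
    (starPartialJoin R₀ R p s).card = (factFiltered R₀ R p).card := by
  have hF : ∀ a ∈ factFiltered R₀ R p, ∀ i, ∃ b ∈ R i, p i a b := by
    intro a ha
    exact (Finset.mem_filter.mp ha).2
  apply Finset.card_bij (fun x _ => x.1)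
  · rintro ⟨a, f⟩ hx
    simp only [starPartialJoin, Finset.mem_filter, Finset.mem_product] at hx
    exact hx.1.1
  · rintro ⟨a, f⟩ hx ⟨a', g⟩ hy h
    simp only [starPartialJoin, Finset.mem_filter, Finset.mem_product,
      Finset.mem_pi] at hx hy
    cases h
    refine Prod.ext rfl (funext fun i => funext fun hi => ?_)
    exact hkey i a _ (hx.1.2 i hi) _ (hy.1.2 i hi) (hx.2 i hi) (hy.2 i hi)
  · intro a ha
    refine ⟨⟨a, fun i _ => (hF a ha i).choose⟩, ?_, rfl⟩
    simp only [starPartialJoin, Finset.mem_filter, Finset.mem_product, Finset.mem_pi]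
    exact ⟨⟨ha, fun i _ => (hF a ha i).choose_spec.1⟩,
      fun i _ => (hF a ha i).choose_spec.2⟩

/-- **Closed form for the star query cost (derived in the proof of Lemma 4.3).**
For a star query with PKFK joins, the cost of the right deep tree
`T(R₀, R (σ 0), …, R (σ (n-1)))` equals `(Σ i, |R i|) + (n + 1) * |J|` for every
permutation `σ`, where `J` is the full star join. -/
theorem star_cost_closed_form {α : Type*} {n : ℕ} (hn : 1 ≤ n)
    {β : Fin n → Type*}
    (R₀ : Finset α) (R : ∀ i, Finset (β i))
    (p : ∀ i, α → β i → Prop) [∀ i a b, Decidable (p i a b)]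
    (hkey : ∀ (i : Fin n) (a : α), ∀ b₁ ∈ R i, ∀ b₂ ∈ R i,
      p i a b₁ → p i a b₂ → b₁ = b₂) :
    ∀ σ : Equiv.Perm (Fin n),
      starCost R₀ R p σ = (∑ i, (R i).card) + (n + 1) * (starJoin R₀ R p).card := by
  intro σ
  rw [starJoin_card_eq R₀ R p hkey]
  unfold starCost
  rw [Finset.sum_congr rfl fun k _ => starPartialJoin_card_eq R₀ R p hkey _]
  rw [Finset.sum_const, Finset.card_range]
  ring
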